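/- (Concrete content of Theorem 3.2(1a).) Let f be a Markov interval map, x ∈ E_f, and let V ⊆ {1,…,n} be such that â_{i,ι(x)} = 0 for every i ∈ V. Then the operators S_{ij} := T_i T_j T_j* (for a_{ij} = 1) and P_i := T_i T_i* on H_x satisfy all the defining relations of the relative graph algebra C*(G_{A_f},V): the P_i are mutually orthogonal projections, S_{ij}* S_{ij} = P_j, S_{ij} S_{ij}* ≤ P_i, and for every v ∈ V one has the exact vertex relation P_v = Σ_{j : a_{vj} = 1} S_{vj} S_{vj}*. -/

import Mathlib

open scoped Classical ENNReal

noncomputable section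

/-- Partition and branch data for a Markov interval map with `n` Markov
subintervals.  `cm j` is the point `c_j⁻` and `cp j` is `c_j⁺` (with
`cm 0 = cp 0 = c₀` and `cm n = cp n = c_n`).  `f` is the globally defined map,
`F j` is the branch of `f` on the `j`-th Markov interval (indexed by
`j = 0, …, n-1`, corresponding to the interval `I_{j+1}` of the paper) and
`F' j` is the derivative of that branch. -/
structure MarkovSystem (n : ℕ) where
  cm : ℕ → ℝ
  cp : ℕ → ℝ
  f : ℝ → ℝ
  F : ℕ → ℝ → ℝ
  F' : ℕ → ℝ → ℝ
  two_le : 2 ≤ n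
  cm_zero : cm 0 = cp 0
  cm_n : cm n = cp n
  cm_le_cp : ∀ j ≤ n, cm j ≤ cp j
  cp_lt_cm : ∀ j < n, cp j < cm (j + 1)

namespace MarkovSystem

variable {n : ℕ} (M : MarkovSystem n)

/-- The Markov interval `I_{j+1} = [c_j⁺, c_{j+1}⁻]` (for `j < n`). -/
def Ipart (j : ℕ) : Set ℝ := Set.Icc (M.cp j) (M.cm (j + 1))

/-- The escape interval `E_j = (c_j⁻, c_j⁺)` (for `1 ≤ j ≤ n-1`). -/
def Epart (j : ℕ) : Set ℝ := Set.Ioo (M.cm j) (M.cp j)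

/-- The ambient interval `I = [c₀, c_n]`. -/
def itv : Set ℝ := Set.Icc (M.cm 0) (M.cm n)

/-- The domain of `f`, namely `⋃_{j=1}^n I_j`. -/
def dom : Set ℝ := ⋃ j ∈ Finset.range n, M.Ipart j

/-- The set `Γ` of partition boundary points. -/
def Gamma : Set ℝ := {y | ∃ j ≤ n, y = M.cm j ∨ y = M.cp j}

/-- `q`-fold image of a set under `f`, applying `f` only where it is defined. -/
def iterImage : ℕ → Set ℝ → Set ℝ
  | 0, S => S
  | q + 1, S => M.f '' (iterImage q S ∩ M.dom)

/-- `f^k(x)` is defined, i.e. all earlier iterates lie in the domain. -/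
def definedUpTo (k : ℕ) (x : ℝ) : Prop := ∀ l < k, M.f^[l] x ∈ M.dom

/-- The orbit equivalence relation `R_f`. -/
def Rrel (x y : ℝ) : Prop :=
  ∃ p q : ℕ, M.definedUpTo p x ∧ M.definedUpTo q y ∧ M.f^[p] x = M.f^[q] y

/-- The generalized orbit `R_f(x)` of a point `x ∈ I`. -/
def Rclass (x : ℝ) : Set ℝ := {y | y ∈ M.itv ∧ M.Rrel x y}

/-- The maximal invariant set `Ω_f`. -/
def Omega : Set ℝ := {x | x ∈ M.itv ∧ ∀ k, M.f^[k] x ∈ M.dom}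

/-- The escape set `E_f = I \ Ω_f`. -/
def Esc : Set ℝ := M.itv \ M.Omega

/-- The regular set `Λ_f = Ω_f \ R_f(Γ)`. -/
def Lambda : Set ℝ := {x | x ∈ M.Omega ∧ ∀ γ ∈ M.Gamma, ¬ M.Rrel x γ}

/-- The escape time of a point of the escape set. -/
def tau (x : ℝ) : ℕ := sInf {k | M.f^[k] x ∉ M.dom}

/-- The final escape point `e(x) = f^{τ(x)}(x)`. -/
def e (x : ℝ) : ℝ := M.f^[M.tau x] x

/-- The transition-matrix condition `a_{ij} = 1`, i.e. `f(int I_i) ⊇ int I_j`. -/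
def trans (i j : ℕ) : Prop := interior (M.Ipart j) ⊆ M.F i '' interior (M.Ipart i)

/-- The escape-transition condition `â_{ik} = 1`, i.e. `int I_i ∩ f⁻¹(E_k) ≠ ∅`. -/
def ahat (i k : ℕ) : Prop := (interior (M.Ipart i) ∩ M.F i ⁻¹' M.Epart k).Nonempty

end MarkovSystem

/-- The defining properties (P1)-(P4) of a Markov interval map, together with the
compatibility of the global map `f` with the branches `F j`:  `f` agrees with `F j`
on `I_j` except possibly at a boundary point shared with an adjacent interval,
where `f` is given by one of the two adjacent branches. -/
structure IsMarkov {n : ℕ} (M : MarkovSystem n) : Prop where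
  compat₁ : ∀ j < n, ∀ x ∈ M.Ipart j, (∀ k < n, k ≠ j → x ∉ M.Ipart k) → M.f x = M.F j x
  compat₂ : ∀ x ∈ M.dom, ∃ j, j < n ∧ x ∈ M.Ipart j ∧ M.f x = M.F j x
  maps_into : ∀ j < n, M.F j '' M.Ipart j ⊆ M.itv
  onto : M.itv ⊆ ⋃ j ∈ Finset.range n, M.F j '' M.Ipart j
  markov : ∀ i < n, ∃ S T : Set ℕ, S ⊆ {j | j < n} ∧ T ⊆ {j | 1 ≤ j ∧ j < n} ∧
    M.F i '' M.Ipart i = (⋃ j ∈ S, M.Ipart j) ∪ (⋃ j ∈ T, M.Epart j)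
  deriv : ∀ i < n, ∀ x ∈ M.Ipart i, HasDerivWithinAt (M.F i) (M.F' i x) (M.Ipart i) x
  derivCont : ∀ i < n, ContinuousOn (M.F' i) (M.Ipart i)
  mono : ∀ i < n, StrictMonoOn (M.F i) (M.Ipart i) ∨ StrictAntiOn (M.F i) (M.Ipart i)
  expansive : ∃ b > 1, ∀ i < n, ∀ x ∈ M.Ipart i, b < |M.F' i x|
  aperiodic : ∀ i < n, ∃ q, M.dom ⊆ M.iterImage q (M.Ipart i)

namespace MarkovSystem

variable {n : ℕ} (M : MarkovSystem n)

/-- The Hilbert space `H_x = ℓ²(R_f(x))`. -/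
abbrev Hsp (x : ℝ) : Type _ := lp (fun _ : M.Rclass x => ℂ) 2

/-- The canonical orthonormal basis vector `δ_z` of `H_x`, for `z ∈ R_f(x)`. -/
def dvec {x : ℝ} (z : M.Rclass x) : M.Hsp x := lp.single 2 z 1

/-- `T` is the bounded operator `T_i` on `H_x`, determined on the basis by
`T_i δ_y = δ_{(f|_{I_i})⁻¹(y)}` if `y ∈ f(I_i)` and `T_i δ_y = 0` otherwise. -/
def IsBranchOp (x : ℝ) (i : ℕ) (T : M.Hsp x →L[ℂ] M.Hsp x) : Prop :=
  (∀ z w : M.Rclass x, (w : ℝ) ∈ M.Ipart i → M.F i w = (z : ℝ) →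
      T (M.dvec z) = M.dvec w) ∧
  (∀ z : M.Rclass x, (z : ℝ) ∉ M.F i '' M.Ipart i → T (M.dvec z) = 0)

/-- `Pe` is the rank-one orthogonal projection onto `ℂ δ_{e(x)}`. -/
def IsEscProj (x : ℝ) (Pe : M.Hsp x →L[ℂ] M.Hsp x) : Prop :=
  ∀ z : M.Rclass x, Pe (M.dvec z) = if (z : ℝ) = M.e x then M.dvec z else 0

end MarkovSystem
/-!
Points of the generalised orbit `R_f(x)` of an escaping point never meet the set `Γ` of partition
endpoints: `Γ ⊆ dom f` is forward invariant by the Markov property, whereas every point of `R_f(x)`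
eventually leaves `dom f`. Hence every `z ∈ R_f(x) ∩ I_i` lies in the interior of `I_i` and in no
other `I_k`, and `R_f(x)` is closed under the branches `f|_{I_i}` and their inverses. On the basis
of `ℓ²(R_f(x))` the operator `T_i*` is then `δ_u ↦ δ_{f(u)}` for `u ∈ I_i` (and `0` otherwise), so
`P_i`, `S_{ij} S_{ij}*` and `S_{ij}* S_{ij}` are all coordinate projections, onto `I_i`,
`I_i ∩ f⁻¹(I_j)` and `I_j ∩ f(I_i)`. The relations become identities between subsets of `R_f(x)`;
the vertex relation at `v` says that `f` maps `R_f(x) ∩ I_v` into `dom f`, which holds because a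
point of `R_f(x)` outside `dom f` can only be `e(x) ∈ E_{ι(x)}`, and `â_{v,ι(x)} = 0`.
-/

open scoped lp

section CoordProj

variable {ι : Type*} [DecidableEq ι]

theorem inner_lpSingle_one_left (i : ι) (v : ℓ²(ι, ℂ)) :
    inner ℂ (lp.single 2 i (1 : ℂ)) v = v i := by
  simp [lp.inner_single_left]

theorem ext_lpSingle {A B : ℓ²(ι, ℂ) →L[ℂ] ℓ²(ι, ℂ)}
    (h : ∀ i, A (lp.single 2 i 1) = B (lp.single 2 i 1)) : A = B :=
  lp.ext_continuousLinearMap ENNReal.ofNat_ne_top fun i => ContinuousLinearMap.ext_ring (h i)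

theorem star_apply_apply_eq_inner (T : ℓ²(ι, ℂ) →L[ℂ] ℓ²(ι, ℂ)) (v : ℓ²(ι, ℂ)) (i : ι) :
    star T v i = inner ℂ (T (lp.single 2 i 1)) v := by
  rw [← inner_lpSingle_one_left, ContinuousLinearMap.star_eq_adjoint,
    ContinuousLinearMap.adjoint_inner_right]

def IsCoordProj (A : ℓ²(ι, ℂ) →L[ℂ] ℓ²(ι, ℂ)) (s : Set ι) : Prop :=
  ∀ i, A (lp.single 2 i 1) = s.indicator (fun j => lp.single 2 j 1) i

namespace IsCoordProj

variable {A B : ℓ²(ι, ℂ) →L[ℂ] ℓ²(ι, ℂ)} {s t : Set ι}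

theorem zero : IsCoordProj (0 : ℓ²(ι, ℂ) →L[ℂ] ℓ²(ι, ℂ)) ∅ := fun i => by simp

theorem unique (hA : IsCoordProj A s) (hB : IsCoordProj B t) (hst : s = t) : A = B :=
  ext_lpSingle fun i => by rw [hA, hB, hst]

theorem mul (hA : IsCoordProj A s) (hB : IsCoordProj B t) : IsCoordProj (A * B) (s ∩ t) := by
  intro i
  by_cases hi : i ∈ t <;> simp [Set.indicator_apply, hi, hA i, hB i]

theorem sub (hA : IsCoordProj A s) (hB : IsCoordProj B t) (hts : t ⊆ s) :
    IsCoordProj (A - B) (s \ t) := by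
  intro i
  by_cases hi : i ∈ t
  · simp [hi, hA i, hB i, hts hi]
  · simp [Set.indicator_apply, hi, hA i, hB i]

theorem sum {κ : Type*} {A : κ → ℓ²(ι, ℂ) →L[ℂ] ℓ²(ι, ℂ)} {s : κ → Set ι} (K : Finset κ)
    (hA : ∀ k ∈ K, IsCoordProj (A k) (s k)) (hs : (K : Set κ).PairwiseDisjoint s) :
    IsCoordProj (∑ k ∈ K, A k) (⋃ k ∈ K, s k) := by
  intro i
  rw [Finset.indicator_biUnion_apply K s hs, FunLike.coe_sum, Finset.sum_apply]
  exact Finset.sum_congr rfl fun k hk => hA k hk i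

theorem isStarProjection (hA : IsCoordProj A s) (hA' : IsSelfAdjoint A) : IsStarProjection A :=
  ⟨(hA.mul hA).unique hA (Set.inter_self s), hA'⟩

end IsCoordProj

end CoordProj

section StarSemigroup

variable {R : Type*} [Semigroup R] [StarMul R] {p : R}

theorem IsStarProjection.mul_mul_star_mul (hp : IsStarProjection p) (t : R) :
    (t * p) * star (t * p) = t * p * star t := by
  rw [star_mul, hp.isSelfAdjoint.star_eq, mul_assoc, ← mul_assoc p, hp.isIdempotentElem.eq,
    mul_assoc]

theorem IsSelfAdjoint.star_mul_mul_mul (hp : IsSelfAdjoint p) (t : R) :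
    star (t * p) * (t * p) = p * (star t * t) * p := by
  rw [star_mul, hp.star_eq]
  simp only [mul_assoc]

end StarSemigroup

namespace MarkovSystem

variable {n : ℕ} (M : MarkovSystem n)

section Partition

theorem cm_le_cm_of_le {j k : ℕ} (hjk : j ≤ k) (hk : k ≤ n) : M.cm j ≤ M.cm k := by
  induction k, hjk using Nat.le_induction with
  | base => exact le_rfl
  | succ k _ ih =>
    exact (ih (by omega)).trans ((M.cm_le_cp k (by omega)).trans (M.cp_lt_cm k (by omega)).le)

theorem cp_le_cm_of_lt {j k : ℕ} (hjk : j < k) (hk : k ≤ n) : M.cp j ≤ M.cm k :=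
  (M.cp_lt_cm j (by omega)).le.trans (M.cm_le_cm_of_le hjk hk)

theorem cm_le_cp_of_le {j k : ℕ} (hjk : j ≤ k) (hk : k ≤ n) : M.cm j ≤ M.cp k :=
  (M.cm_le_cm_of_le hjk hk).trans (M.cm_le_cp k hk)

theorem cp_le_cp_of_le {j k : ℕ} (hjk : j ≤ k) (hk : k ≤ n) : M.cp j ≤ M.cp k := by
  rcases hjk.eq_or_lt with rfl | h
  · exact le_rfl
  · exact (M.cp_le_cm_of_lt h hk).trans (M.cm_le_cp k hk)

theorem cp_mem_Ipart {j : ℕ} (hj : j < n) : M.cp j ∈ M.Ipart j :=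
  ⟨le_rfl, (M.cp_lt_cm j hj).le⟩

theorem cm_succ_mem_Ipart {j : ℕ} (hj : j < n) : M.cm (j + 1) ∈ M.Ipart j :=
  ⟨(M.cp_lt_cm j hj).le, le_rfl⟩

theorem Ipart_subset_itv {j : ℕ} (hj : j < n) : M.Ipart j ⊆ M.itv := fun _ hz =>
  ⟨(M.cm_zero.trans_le (M.cp_le_cp_of_le j.zero_le hj.le)).trans hz.1,
    hz.2.trans (M.cm_le_cm_of_le hj le_rfl)⟩

theorem mem_dom_iff {z : ℝ} : z ∈ M.dom ↔ ∃ j < n, z ∈ M.Ipart j := by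
  simp [dom]

theorem mem_dom {j : ℕ} (hj : j < n) {z : ℝ} (hz : z ∈ M.Ipart j) : z ∈ M.dom :=
  M.mem_dom_iff.mpr ⟨j, hj, hz⟩

theorem notMem_dom_of_mem_Epart {l : ℕ} (hl : l ≤ n) {z : ℝ} (hz : z ∈ M.Epart l) :
    z ∉ M.dom := by
  rw [mem_dom_iff]
  rintro ⟨k, hk, hzk⟩
  rcases le_or_gt l k with h | h
  · exact hz.2.not_ge ((M.cp_le_cp_of_le h hk.le).trans hzk.1)
  · exact hz.1.not_ge (hzk.2.trans (M.cm_le_cm_of_le h hl))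

theorem Gamma_subset_dom : M.Gamma ⊆ M.dom := by
  have := M.two_le
  rintro _ ⟨l, hl, rfl | rfl⟩
  · rcases l with _ | l
    · exact M.mem_dom (by omega) (M.cm_zero ▸ M.cp_mem_Ipart (by omega))
    · exact M.mem_dom hl (M.cm_succ_mem_Ipart hl)
  · rcases hl.lt_or_eq with hl | rfl
    · exact M.mem_dom hl (M.cp_mem_Ipart hl)
    · obtain ⟨m, rfl⟩ : ∃ m, l = m + 1 := ⟨l - 1, by omega⟩
      exact M.mem_dom (by omega) (M.cm_n ▸ M.cm_succ_mem_Ipart (by omega))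

theorem notMem_Gamma_of_mem_interior {j : ℕ} (hj : j < n) {z : ℝ}
    (hz : z ∈ interior (M.Ipart j)) : z ∉ M.Gamma := by
  rw [Ipart, interior_Icc] at hz
  rintro ⟨l, hl, rfl | rfl⟩ <;> rcases le_or_gt l j with h | h
  · exact hz.1.not_ge (M.cm_le_cp_of_le h hj.le)
  · exact hz.2.not_ge (M.cm_le_cm_of_le h hl)
  · exact hz.1.not_ge (M.cp_le_cp_of_le h hj.le)
  · exact hz.2.not_ge (M.cm_le_cp_of_le h hl)

theorem mem_interior_of_notMem_Gamma {j : ℕ} (hj : j < n) {z : ℝ} (hz : z ∈ M.Ipart j)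
    (hγ : z ∉ M.Gamma) : z ∈ interior (M.Ipart j) := by
  rw [Ipart, interior_Icc]
  exact ⟨hz.1.lt_of_ne fun h => hγ ⟨j, hj.le, .inr h.symm⟩,
    hz.2.lt_of_ne fun h => hγ ⟨j + 1, hj, .inl h⟩⟩

theorem mem_Gamma_of_mem_Ipart_of_mem_Ipart {i k : ℕ} (hi : i < n) (hk : k < n) (hik : i ≠ k)
    {z : ℝ} (hzi : z ∈ M.Ipart i) (hzk : z ∈ M.Ipart k) : z ∈ M.Gamma := by
  wlog h : i < k generalizing i k
  · exact this hk hi hik.symm hzk hzi (by omega)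
  exact ⟨i + 1, by omega, .inl (le_antisymm hzi.2 ((M.cm_le_cp_of_le h hk.le).trans hzk.1))⟩

end Partition

section Boundary

variable {M}

theorem mem_Gamma_of_isLeast_or_isGreatest (hM : IsMarkov M) {i : ℕ} (hi : i < n) {y : ℝ}
    (hy : IsLeast (M.F i '' M.Ipart i) y ∨ IsGreatest (M.F i '' M.Ipart i) y) :
    y ∈ M.Gamma := by
  obtain ⟨S, T, hS, hT, himage⟩ := hM.markov i hi
  rw [himage] at hy
  rcases hy.elim (·.1) (·.1) with hyI | hyE
  · obtain ⟨l, hl, hyl⟩ := Set.mem_iUnion₂.mp hyI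
    have hsub := (Set.subset_biUnion_of_mem (u := M.Ipart) hl).trans
      (Set.subset_union_left (t := ⋃ j ∈ T, M.Epart j))
    rcases hy with hy | hy
    · exact ⟨l, (hS hl).le, .inr (le_antisymm (hy.2 (hsub (M.cp_mem_Ipart (hS hl)))) hyl.1)⟩
    · exact ⟨l + 1, hS hl, .inl (le_antisymm hyl.2 (hy.2 (hsub (M.cm_succ_mem_Ipart (hS hl)))))⟩
  · obtain ⟨l, hl, hyl⟩ := Set.mem_iUnion₂.mp hyE
    have hsub := (Set.subset_biUnion_of_mem (u := M.Epart) hl).trans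
      (Set.subset_union_right (s := ⋃ j ∈ S, M.Ipart j))
    rcases hy with hy | hy
    · obtain ⟨a, hla, hay⟩ := exists_between hyl.1
      exact absurd (hy.2 (hsub ⟨hla, hay.trans hyl.2⟩)) hay.not_ge
    · obtain ⟨a, hya, hal⟩ := exists_between hyl.2
      exact absurd (hy.2 (hsub ⟨hyl.1.trans hya, hal⟩)) hya.not_ge

theorem F_mem_Gamma_of_notMem_interior (hM : IsMarkov M) {i : ℕ} (hi : i < n) {z : ℝ}
    (hz : z ∈ M.Ipart i) (hz' : z ∉ interior (M.Ipart i)) : M.F i z ∈ M.Gamma := by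
  have hend : IsLeast (M.Ipart i) z ∨ IsGreatest (M.Ipart i) z := by
    rw [Ipart, interior_Icc, Set.mem_Ioo, not_and_or, not_lt, not_lt] at hz'
    rcases hz' with h | h
    · exact .inl ⟨hz, fun _ hw => (le_antisymm h hz.1).symm ▸ hw.1⟩
    · exact .inr ⟨hz, fun _ hw => (le_antisymm hz.2 h) ▸ hw.2⟩
  apply mem_Gamma_of_isLeast_or_isGreatest hM hi
  rcases hM.mono i hi with h | h
  · exact hend.imp h.monotoneOn.map_isLeast h.monotoneOn.map_isGreatest
  · exact (hend.imp h.antitoneOn.map_isLeast h.antitoneOn.map_isGreatest).symm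

theorem mapsTo_f_Gamma (hM : IsMarkov M) : Set.MapsTo M.f M.Gamma M.Gamma := fun γ hγ => by
  obtain ⟨j, hj, hγj, hf⟩ := hM.compat₂ γ (M.Gamma_subset_dom hγ)
  exact hf ▸ F_mem_Gamma_of_notMem_interior hM hj hγj
    fun h => M.notMem_Gamma_of_mem_interior hj h hγ

theorem f_eq_F_of_mem_interior (hM : IsMarkov M) {i : ℕ} (hi : i < n) {z : ℝ}
    (hz : z ∈ interior (M.Ipart i)) : M.f z = M.F i z :=
  hM.compat₁ i hi z (interior_subset hz) fun _ hk hki hzk => M.notMem_Gamma_of_mem_interior hi hz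
    (M.mem_Gamma_of_mem_Ipart_of_mem_Ipart hi hk hki.symm (interior_subset hz) hzk)

theorem trans_of_Ipart_subset_image (hM : IsMarkov M) {i l : ℕ} (hi : i < n) (hl : l < n)
    (hsub : M.Ipart l ⊆ M.F i '' M.Ipart i) : M.trans i l := by
  intro y hy
  obtain ⟨u, hu, rfl⟩ := hsub (interior_subset hy)
  exact ⟨u, by_contra fun hu' => M.notMem_Gamma_of_mem_interior hl hy
    (F_mem_Gamma_of_notMem_interior hM hi hu hu'), rfl⟩

end Boundary

section Orbit

theorem definedUpTo_succ {k : ℕ} {z : ℝ} :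
    M.definedUpTo (k + 1) z ↔ z ∈ M.dom ∧ M.definedUpTo k (M.f z) :=
  Nat.forall_lt_succ_left

theorem Rrel_f_right {x z : ℝ} (hz : z ∈ M.dom) (h : M.Rrel x z) : M.Rrel x (M.f z) := by
  obtain ⟨p, q, hp, hq, heq⟩ := h
  cases q with
  | zero =>
    refine ⟨p + 1, 0, Nat.forall_lt_succ_right.mpr ⟨hp, heq ▸ hz⟩, nofun, ?_⟩
    rw [Function.iterate_succ_apply', heq]
    rfl
  | succ q => exact ⟨p, q, hp, (M.definedUpTo_succ.mp hq).2, heq⟩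

theorem Rrel_of_f_right {x w : ℝ} (hw : w ∈ M.dom) (h : M.Rrel x (M.f w)) : M.Rrel x w :=
  let ⟨p, q, hp, hq, heq⟩ := h
  ⟨p, q + 1, hp, M.definedUpTo_succ.mpr ⟨hw, hq⟩, heq⟩

end Orbit

section Escape

variable {M} {x : ℝ}

theorem iterate_tau_notMem_dom (hx : x ∈ M.Esc) : M.f^[M.tau x] x ∉ M.dom :=
  Nat.sInf_mem (s := {k | M.f^[k] x ∉ M.dom}) <| by
    by_contra h
    exact hx.2 ⟨hx.1, fun k => by_contra fun hk => h ⟨k, hk⟩⟩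

theorem le_tau (hx : x ∈ M.Esc) {p : ℕ} (hp : M.definedUpTo p x) : p ≤ M.tau x :=
  not_lt.mp fun h => iterate_tau_notMem_dom hx (hp _ h)

theorem eq_e_of_mem_Rclass_of_notMem_dom (hx : x ∈ M.Esc) {z : ℝ} (hz : z ∈ M.Rclass x)
    (hzd : z ∉ M.dom) : z = M.e x := by
  obtain ⟨p, q, hp, hq, heq⟩ := hz.2
  obtain rfl : q = 0 := Nat.eq_zero_of_not_pos fun h => hzd (hq 0 h)
  obtain rfl : p = M.tau x :=
    le_antisymm (le_tau hx hp) (Nat.sInf_le (show M.f^[p] x ∉ M.dom from heq ▸ hzd))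
  exact heq.symm

theorem notMem_Gamma_of_mem_Rclass (hM : IsMarkov M) (hx : x ∈ M.Esc) {z : ℝ}
    (hz : z ∈ M.Rclass x) : z ∉ M.Gamma := by
  intro hγ
  obtain ⟨p, q, hp, -, heq⟩ := hz.2
  have hq : M.f^[q] z ∈ M.Gamma := (mapsTo_f_Gamma hM).iterate q hγ
  have hle : p ≤ M.tau x := le_tau hx hp
  refine iterate_tau_notMem_dom hx (M.Gamma_subset_dom ?_)
  rw [← Nat.sub_add_cancel hle, Function.iterate_add_apply, heq]
  exact (mapsTo_f_Gamma hM).iterate _ hq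

theorem mem_interior_of_mem_Rclass (hM : IsMarkov M) (hx : x ∈ M.Esc) {z : ℝ}
    (hz : z ∈ M.Rclass x) {i : ℕ} (hi : i < n) (hzi : z ∈ M.Ipart i) :
    z ∈ interior (M.Ipart i) :=
  M.mem_interior_of_notMem_Gamma hi hzi (notMem_Gamma_of_mem_Rclass hM hx hz)

theorem eq_of_mem_Rclass_of_mem_Ipart (hM : IsMarkov M) (hx : x ∈ M.Esc) {z : ℝ}
    (hz : z ∈ M.Rclass x) {i k : ℕ} (hi : i < n) (hk : k < n) (hzi : z ∈ M.Ipart i)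
    (hzk : z ∈ M.Ipart k) : i = k :=
  by_contra fun h => notMem_Gamma_of_mem_Rclass hM hx hz
    (M.mem_Gamma_of_mem_Ipart_of_mem_Ipart hi hk h hzi hzk)

theorem F_mem_Rclass (hM : IsMarkov M) (hx : x ∈ M.Esc) {z : ℝ} (hz : z ∈ M.Rclass x) {i : ℕ}
    (hi : i < n) (hzi : z ∈ M.Ipart i) : M.F i z ∈ M.Rclass x :=
  ⟨hM.maps_into i hi ⟨z, hzi, rfl⟩, f_eq_F_of_mem_interior hM hi
    (mem_interior_of_mem_Rclass hM hx hz hi hzi) ▸ M.Rrel_f_right (M.mem_dom hi hzi) hz.2⟩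

theorem exists_mem_Rclass_F_eq (hM : IsMarkov M) (hx : x ∈ M.Esc) {z : ℝ}
    (hz : z ∈ M.Rclass x) {i : ℕ} (hi : i < n) (him : z ∈ M.F i '' M.Ipart i) :
    ∃ w ∈ M.Ipart i, M.F i w = z ∧ w ∈ M.Rclass x := by
  obtain ⟨w, hw, rfl⟩ := him
  have hwint : w ∈ interior (M.Ipart i) := by_contra fun h =>
    notMem_Gamma_of_mem_Rclass hM hx hz (F_mem_Gamma_of_notMem_interior hM hi hw h)
  exact ⟨w, hw, rfl, M.Ipart_subset_itv hi hw,
    M.Rrel_of_f_right (M.mem_dom hi hw) (f_eq_F_of_mem_interior hM hi hwint ▸ hz.2)⟩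

theorem F_mem_dom_of_not_ahat (hM : IsMarkov M) (hx : x ∈ M.Esc) {j0 : ℕ}
    (hex : M.e x ∈ M.Epart j0) {v : ℕ} (hv : v < n) (hna : ¬ M.ahat v j0) {z : ℝ}
    (hz : z ∈ M.Rclass x) (hzv : z ∈ M.Ipart v) : M.F v z ∈ M.dom := by
  by_contra hd
  have he := eq_e_of_mem_Rclass_of_notMem_dom hx (F_mem_Rclass hM hx hz hv hzv) hd
  exact hna ⟨z, mem_interior_of_mem_Rclass hM hx hz hv hzv, show M.F v z ∈ _ from he ▸ hex⟩

theorem trans_of_mem_Rclass (hM : IsMarkov M) (hx : x ∈ M.Esc) {z : ℝ} (hz : z ∈ M.Rclass x)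
    {v j : ℕ} (hv : v < n) (hj : j < n) (hzv : z ∈ M.Ipart v) (hzj : M.F v z ∈ M.Ipart j) :
    M.trans v j := by
  obtain ⟨S, T, hS, hT, himage⟩ := hM.markov v hv
  have hmem : M.F v z ∈ M.F v '' M.Ipart v := ⟨z, hzv, rfl⟩
  rw [himage] at hmem
  rcases hmem with hI | hE
  · obtain ⟨l, hl, hzl⟩ := Set.mem_iUnion₂.mp hI
    obtain rfl := eq_of_mem_Rclass_of_mem_Ipart hM hx (F_mem_Rclass hM hx hz hv hzv) hj (hS hl)
      hzj hzl
    exact trans_of_Ipart_subset_image hM hv hj (himage ▸ (Set.subset_biUnion_of_mem hl).trans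
      Set.subset_union_left)
  · obtain ⟨l, hl, hzl⟩ := Set.mem_iUnion₂.mp hE
    exact absurd (M.mem_dom hj hzj) (M.notMem_dom_of_mem_Epart (hT hl).2.le hzl)

end Escape

section Operators

variable {M} {x : ℝ}

theorem isCoordProj_preimage_iff {A : M.Hsp x →L[ℂ] M.Hsp x} {S : Set ℝ} :
    IsCoordProj A (Subtype.val ⁻¹' S) ↔
      ∀ z : M.Rclass x, A (M.dvec z) = if (z : ℝ) ∈ S then M.dvec z else 0 :=
  Iff.rfl

namespace IsBranchOp

variable {i : ℕ} {T : M.Hsp x →L[ℂ] M.Hsp x}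

theorem inner_apply_dvec (hM : IsMarkov M) (hx : x ∈ M.Esc) (hi : i < n)
    (hT : M.IsBranchOp x i T) (z u : M.Rclass x) :
    inner ℂ (T (M.dvec z)) (M.dvec u) =
      if (u : ℝ) ∈ M.Ipart i ∧ M.F i u = z then 1 else 0 := by
  by_cases him : (z : ℝ) ∈ M.F i '' M.Ipart i
  · obtain ⟨w, hw, hFw, hwR⟩ := exists_mem_Rclass_F_eq hM hx z.2 hi him
    have hinj : Set.InjOn (M.F i) (M.Ipart i) := (hM.mono i hi).elim (·.injOn) (·.injOn)
    rw [hT.1 z ⟨w, hwR⟩ hw hFw, dvec, inner_lpSingle_one_left, dvec, lp.single_apply,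
      Pi.single_apply]
    refine if_congr ⟨fun h => ?_, fun ⟨hu, hFu⟩ => Subtype.ext (hinj hw hu (hFw.trans hFu.symm))⟩
      rfl rfl
    subst h
    exact ⟨hw, hFw⟩
  · rw [hT.2 z him, inner_zero_left, if_neg]
    rintro ⟨hu, hFu⟩
    exact him ⟨u, hu, hFu⟩

theorem star_apply_dvec (hM : IsMarkov M) (hx : x ∈ M.Esc) (hi : i < n)
    (hT : M.IsBranchOp x i T) (u : M.Rclass x) :
    star T (M.dvec u) =
      if h : (u : ℝ) ∈ M.Ipart i then M.dvec ⟨M.F i u, F_mem_Rclass hM hx u.2 hi h⟩ else 0 := by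
  refine lp.ext (funext fun z => ?_)
  have h := hT.inner_apply_dvec hM hx hi z u
  rw [dvec] at h
  rw [star_apply_apply_eq_inner, h]
  by_cases hu : (u : ℝ) ∈ M.Ipart i
  · simp [hu, dvec, Pi.single_apply, Subtype.ext_iff, eq_comm]
  · simp [hu]

theorem isCoordProj_mul_star (hM : IsMarkov M) (hx : x ∈ M.Esc) (hi : i < n)
    (hT : M.IsBranchOp x i T) : IsCoordProj (T * star T) (Subtype.val ⁻¹' M.Ipart i) := by
  refine isCoordProj_preimage_iff.mpr fun z => ?_
  rw [mul_apply_eq_comp, hT.star_apply_dvec hM hx hi]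
  by_cases hz : (z : ℝ) ∈ M.Ipart i
  · rw [dif_pos hz, if_pos hz]
    exact hT.1 _ z hz rfl
  · rw [dif_neg hz, if_neg hz, map_zero]

theorem isCoordProj_star_mul (hM : IsMarkov M) (hx : x ∈ M.Esc) (hi : i < n)
    (hT : M.IsBranchOp x i T) :
    IsCoordProj (star T * T) (Subtype.val ⁻¹' (M.F i '' M.Ipart i)) := by
  refine isCoordProj_preimage_iff.mpr fun z => ?_
  rw [mul_apply_eq_comp]
  by_cases him : (z : ℝ) ∈ M.F i '' M.Ipart i
  · obtain ⟨w, hw, hFw, hwR⟩ := exists_mem_Rclass_F_eq hM hx z.2 hi him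
    rw [hT.1 z ⟨w, hwR⟩ hw hFw, hT.star_apply_dvec hM hx hi, dif_pos hw, if_pos him]
    exact congrArg M.dvec (Subtype.ext hFw)
  · rw [hT.2 z him, map_zero, if_neg him]

theorem isCoordProj_mul_mul_star (hM : IsMarkov M) (hx : x ∈ M.Esc) (hi : i < n)
    (hT : M.IsBranchOp x i T) {Q : M.Hsp x →L[ℂ] M.Hsp x} {S : Set ℝ}
    (hQ : IsCoordProj Q (Subtype.val ⁻¹' S)) :
    IsCoordProj (T * Q * star T) (Subtype.val ⁻¹' (M.Ipart i ∩ M.F i ⁻¹' S)) := by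
  refine isCoordProj_preimage_iff.mpr fun u => ?_
  rw [mul_apply_eq_comp, hT.star_apply_dvec hM hx hi]
  by_cases hu : (u : ℝ) ∈ M.Ipart i
  · rw [dif_pos hu, mul_apply_eq_comp, isCoordProj_preimage_iff.mp hQ]
    by_cases hS : M.F i u ∈ S
    · rw [if_pos hS, if_pos ⟨hu, hS⟩]
      exact hT.1 _ u hu rfl
    · rw [if_neg hS, map_zero, if_neg (hS ·.2)]
  · rw [dif_neg hu, map_zero, if_neg (hu ·.1)]

end IsBranchOp

end Operators

section Relations

variable {M} {x : ℝ}

theorem mul_star_mul_mul_star_eq_zero (hM : IsMarkov M) (hx : x ∈ M.Esc) {i j : ℕ} (hi : i < n)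
    (hj : j < n) (hij : i ≠ j) {Ti Tj : M.Hsp x →L[ℂ] M.Hsp x} (hTi : M.IsBranchOp x i Ti)
    (hTj : M.IsBranchOp x j Tj) : (Ti * star Ti) * (Tj * star Tj) = 0 :=
  ((hTi.isCoordProj_mul_star hM hx hi).mul (hTj.isCoordProj_mul_star hM hx hj)).unique
    IsCoordProj.zero <| Set.eq_empty_of_forall_notMem fun z hz =>
      hij (eq_of_mem_Rclass_of_mem_Ipart hM hx z.2 hi hj hz.1 hz.2)

theorem isStarProjection_mul_star (hM : IsMarkov M) (hx : x ∈ M.Esc) {i : ℕ} (hi : i < n)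
    {T : M.Hsp x →L[ℂ] M.Hsp x} (hT : M.IsBranchOp x i T) : IsStarProjection (T * star T) :=
  (hT.isCoordProj_mul_star hM hx hi).isStarProjection (.mul_star_self T)

theorem isCoordProj_edge_mul_star (hM : IsMarkov M) (hx : x ∈ M.Esc) {i j : ℕ} (hi : i < n)
    (hj : j < n) {Ti Tj : M.Hsp x →L[ℂ] M.Hsp x} (hTi : M.IsBranchOp x i Ti)
    (hTj : M.IsBranchOp x j Tj) :
    IsCoordProj ((Ti * (Tj * star Tj)) * star (Ti * (Tj * star Tj)))
      (Subtype.val ⁻¹' (M.Ipart i ∩ M.F i ⁻¹' M.Ipart j)) := by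
  rw [(isStarProjection_mul_star hM hx hj hTj).mul_mul_star_mul]
  exact hTi.isCoordProj_mul_mul_star hM hx hi (hTj.isCoordProj_mul_star hM hx hj)

theorem star_edge_mul_edge (hM : IsMarkov M) (hx : x ∈ M.Esc) {i j : ℕ} (hi : i < n)
    (hj : j < n) (hij : M.trans i j) {Ti Tj : M.Hsp x →L[ℂ] M.Hsp x}
    (hTi : M.IsBranchOp x i Ti) (hTj : M.IsBranchOp x j Tj) :
    star (Ti * (Tj * star Tj)) * (Ti * (Tj * star Tj)) = Tj * star Tj := by
  have hPj := hTj.isCoordProj_mul_star hM hx hj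
  rw [(IsSelfAdjoint.mul_star_self Tj).star_mul_mul_mul]
  refine ((hPj.mul (hTi.isCoordProj_star_mul hM hx hi)).mul hPj).unique hPj ?_
  refine Set.ext fun z => ⟨fun hz => hz.2, fun hz => ⟨⟨hz, ?_⟩, hz⟩⟩
  exact Set.image_mono interior_subset (hij (mem_interior_of_mem_Rclass hM hx z.2 hj hz))

theorem isPositive_mul_star_sub_edge_mul_star (hM : IsMarkov M) (hx : x ∈ M.Esc) {i j : ℕ}
    (hi : i < n) (hj : j < n) {Ti Tj : M.Hsp x →L[ℂ] M.Hsp x} (hTi : M.IsBranchOp x i Ti)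
    (hTj : M.IsBranchOp x j Tj) :
    (Ti * star Ti - (Ti * (Tj * star Tj)) * star (Ti * (Tj * star Tj))).IsPositive := by
  have hD := (hTi.isCoordProj_mul_star hM hx hi).sub (isCoordProj_edge_mul_star hM hx hi hj hTi hTj)
    (Set.preimage_mono Set.inter_subset_left)
  exact .of_isStarProjection
    (hD.isStarProjection ((IsSelfAdjoint.mul_star_self Ti).sub (.mul_star_self _)))

theorem pairwiseDisjoint_preimage_F_Ipart (hM : IsMarkov M) (hx : x ∈ M.Esc) {v : ℕ}
    (hv : v < n) : (Finset.range n : Set ℕ).PairwiseDisjoint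
      fun j => (Subtype.val ⁻¹' (M.Ipart v ∩ M.F v ⁻¹' M.Ipart j) : Set (M.Rclass x)) := by
  intro j hj k hk hjk
  refine Set.disjoint_left.mpr fun z hzj hzk => hjk ?_
  exact eq_of_mem_Rclass_of_mem_Ipart hM hx (F_mem_Rclass hM hx z.2 hv hzj.1)
    (Finset.mem_range.mp hj) (Finset.mem_range.mp hk) hzj.2 hzk.2

theorem iUnion_preimage_F_Ipart (hM : IsMarkov M) (hx : x ∈ M.Esc) {j0 : ℕ}
    (hex : M.e x ∈ M.Epart j0) {v : ℕ} (hv : v < n) (hna : ¬ M.ahat v j0) :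
    ⋃ j ∈ Finset.range n, (Subtype.val ⁻¹' (M.Ipart v ∩ M.F v ⁻¹' M.Ipart j) : Set (M.Rclass x)) =
      Subtype.val ⁻¹' M.Ipart v := by
  refine Set.Subset.antisymm (Set.iUnion₂_subset fun j _ _ hz => hz.1) fun z hz => ?_
  obtain ⟨j, hj, hzj⟩ := M.mem_dom_iff.mp (F_mem_dom_of_not_ahat hM hx hex hv hna z.2 hz)
  exact Set.mem_biUnion (Finset.mem_range.mpr hj) ⟨hz, hzj⟩

theorem mul_star_eq_sum_edge_mul_star (hM : IsMarkov M) (hx : x ∈ M.Esc) {j0 : ℕ}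
    (hex : M.e x ∈ M.Epart j0) {v : ℕ} (hv : v < n) (hna : ¬ M.ahat v j0)
    {T : ℕ → M.Hsp x →L[ℂ] M.Hsp x} (hT : ∀ i < n, M.IsBranchOp x i (T i)) :
    T v * star (T v) = ∑ j ∈ Finset.range n, if M.trans v j then
      (T v * (T j * star (T j))) * star (T v * (T j * star (T j))) else 0 := by
  have hedge : ∀ j ∈ Finset.range n, IsCoordProj (if M.trans v j then
      (T v * (T j * star (T j))) * star (T v * (T j * star (T j))) else 0)
      (Subtype.val ⁻¹' (M.Ipart v ∩ M.F v ⁻¹' M.Ipart j)) := by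
    intro j hj
    have hj := Finset.mem_range.mp hj
    split_ifs with hvj
    · exact isCoordProj_edge_mul_star hM hx hv hj (hT v hv) (hT j hj)
    · have hempty : (Subtype.val ⁻¹' (M.Ipart v ∩ M.F v ⁻¹' M.Ipart j) : Set (M.Rclass x)) = ∅ :=
        Set.eq_empty_of_forall_notMem fun z hz =>
          hvj (trans_of_mem_Rclass hM hx z.2 hv hj hz.1 hz.2)
      exact hempty ▸ IsCoordProj.zero
  exact ((hT v hv).isCoordProj_mul_star hM hx hv).unique
    (IsCoordProj.sum _ hedge (pairwiseDisjoint_preimage_F_Ipart hM hx hv))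
    (iUnion_preimage_F_Ipart hM hx hex hv hna).symm

end Relations

end MarkovSystem

theorem relative_graph_algebra_relations_general {n : ℕ} (M : MarkovSystem n) (hM : IsMarkov M)
    {x : ℝ} (hx : x ∈ M.Esc) {j0 : ℕ}
    (hex : M.e x ∈ M.Epart j0)
    (V : Set ℕ) (hV : V ⊆ {i | i < n}) (hVa : ∀ i ∈ V, ¬ M.ahat i j0)
    (T : ℕ → (M.Hsp x →L[ℂ] M.Hsp x)) (hT : ∀ i < n, M.IsBranchOp x i (T i)) :
    (∀ i < n, IsSelfAdjoint (T i * star (T i)) ∧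
      (T i * star (T i)) * (T i * star (T i)) = T i * star (T i)) ∧
    (∀ i < n, ∀ j < n, i ≠ j → (T i * star (T i)) * (T j * star (T j)) = 0) ∧
    (∀ i < n, ∀ j < n, M.trans i j →
      star (T i * (T j * star (T j))) * (T i * (T j * star (T j))) =
        T j * star (T j) ∧
      (T i * star (T i) -
        (T i * (T j * star (T j))) * star (T i * (T j * star (T j)))).IsPositive) ∧
    (∀ v ∈ V, T v * star (T v) =
      ∑ j ∈ Finset.range n, if M.trans v j then
        (T v * (T j * star (T j))) * star (T v * (T j * star (T j))) else 0) := by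
  open MarkovSystem in
  refine ⟨fun i hi => ?_, fun i hi j hj hij => ?_, fun i hi j hj hij => ?_, fun v hv => ?_⟩
  · have hP := isStarProjection_mul_star hM hx hi (hT i hi)
    exact ⟨hP.isSelfAdjoint, hP.isIdempotentElem.eq⟩
  · exact mul_star_mul_mul_star_eq_zero hM hx hi hj hij (hT i hi) (hT j hj)
  · exact ⟨star_edge_mul_edge hM hx hi hj hij (hT i hi) (hT j hj),
      isPositive_mul_star_sub_edge_mul_star hM hx hi hj (hT i hi) (hT j hj)⟩
  · exact mul_star_eq_sum_edge_mul_star hM hx hex (hV hv) (hVa v hv) hT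

/-- Concrete content of Theorem 3.2(1a): if `â_{i,ι(x)} = 0` for every `i ∈ V`,
then the operators `S_{ij} = T_i T_j T_j*` and `P_i = T_i T_i*` on `H_x` satisfy
all the defining relations of the relative graph algebra `C*(G_{A_f}, V)`. -/
theorem relative_graph_algebra_relations {n : ℕ} (M : MarkovSystem n) (hM : IsMarkov M)
    {x : ℝ} (hx : x ∈ M.Esc) {j0 : ℕ} (hj0 : 1 ≤ j0 ∧ j0 < n)
    (hex : M.e x ∈ M.Epart j0)
    (V : Set ℕ) (hV : V ⊆ {i | i < n}) (hVa : ∀ i ∈ V, ¬ M.ahat i j0)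
    (T : ℕ → (M.Hsp x →L[ℂ] M.Hsp x)) (hT : ∀ i < n, M.IsBranchOp x i (T i)) :
    (∀ i < n, IsSelfAdjoint (T i * star (T i)) ∧
      (T i * star (T i)) * (T i * star (T i)) = T i * star (T i)) ∧
    (∀ i < n, ∀ j < n, i ≠ j → (T i * star (T i)) * (T j * star (T j)) = 0) ∧
    (∀ i < n, ∀ j < n, M.trans i j →
      star (T i * (T j * star (T j))) * (T i * (T j * star (T j))) =
        T j * star (T j) ∧
      (T i * star (T i) -
        (T i * (T j * star (T j))) * star (T i * (T j * star (T j)))).IsPositive) ∧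
    (∀ v ∈ V, T v * star (T v) =
      ∑ j ∈ Finset.range n, if M.trans v j then
        (T v * (T j * star (T j))) * star (T v * (T j * star (T j))) else 0) :=
  relative_graph_algebra_relations_general M hM hx hex V hV hVa T hT
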